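/- arXiv:2211.02747 — 7 statements merged into one kernel-verified Lean document; each statement's English description precedes it below -/
import Mathlib

section
/- For every real λ ≥ 1 and every r ∈ (0, π/2], the quantity −f_λ''(r)/f_λ(r) equals (λ⁴·sin⁴r + λ⁴·sin²r + 6λ² + 4) / (4·B²), where B = λ²·sin²r + 1 and f_λ'' denotes the second derivative of f_λ. -/
/-- The warping function `f_λ(r) = sin r / (λ²·sin²r + 1)^{1/4}`. -/
noncomputable def fl (l r : ℝ) : ℝ :=
  Real.sin r / (l ^ 2 * Real.sin r ^ 2 + 1) ^ ((1 : ℝ) / 4)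

lemma hBpos (l x : ℝ) : 0 < l ^ 2 * Real.sin x ^ 2 + 1 := by positivity

lemma hBd (l x : ℝ) : HasDerivAt (fun y => l ^ 2 * Real.sin y ^ 2 + 1)
    (2 * l ^ 2 * Real.sin x * Real.cos x) x := by
  have h := (((Real.hasDerivAt_sin x).pow 2).const_mul (l ^ 2)).add_const 1
  refine h.congr_deriv ?_
  ring

lemma first_deriv (l x : ℝ) : HasDerivAt (fl l)
    (Real.cos x * (l ^ 2 * Real.sin x ^ 2 / 2 + 1) *
      (l ^ 2 * Real.sin x ^ 2 + 1) ^ (-(5:ℝ)/4)) x := by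
  have hB := hBd l x
  have h1 : HasDerivAt (fun y => (l ^ 2 * Real.sin y ^ 2 + 1) ^ (-(1:ℝ)/4))
      ((-(1:ℝ)/4) * (l ^ 2 * Real.sin x ^ 2 + 1) ^ (-(1:ℝ)/4 - 1) *
        (2 * l ^ 2 * Real.sin x * Real.cos x)) x := by
    have h := hB.rpow_const (p := -(1:ℝ)/4) (Or.inl (ne_of_gt (hBpos l x)))
    convert h using 1
    ring
  have h2 := (Real.hasDerivAt_sin x).mul h1
  have hfun : fl l = fun y => Real.sin y * (l ^ 2 * Real.sin y ^ 2 + 1) ^ (-(1:ℝ)/4) := by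
    funext y
    rw [fl, show (-(1:ℝ)/4) = -((1:ℝ)/4) by norm_num,
      Real.rpow_neg (hBpos l y).le, div_eq_mul_inv]
  rw [hfun]
  refine h2.congr_deriv ?_
  have e1 : (-(1:ℝ)/4 - 1) = (-(5:ℝ)/4) := by norm_num
  rw [e1]
  have e2 : (l ^ 2 * Real.sin x ^ 2 + 1) ^ (-(1:ℝ)/4) =
      (l ^ 2 * Real.sin x ^ 2 + 1) * (l ^ 2 * Real.sin x ^ 2 + 1) ^ (-(5:ℝ)/4) := by
    have h := Real.rpow_add (hBpos l x) 1 (-(5:ℝ)/4)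
    rw [Real.rpow_one] at h
    rw [show (-(1:ℝ)/4) = (1:ℝ) + (-(5:ℝ)/4) by norm_num, h]
  rw [e2]
  ring

theorem stmt_2 (l : ℝ) (hl : 1 ≤ l) (r : ℝ) (hr : r ∈ Set.Ioc 0 (Real.pi / 2)) :
    -(deriv (deriv (fl l)) r) / fl l r =
      (l ^ 4 * Real.sin r ^ 4 + l ^ 4 * Real.sin r ^ 2 + 6 * l ^ 2 + 4) /
        (4 * (l ^ 2 * Real.sin r ^ 2 + 1) ^ 2) := by
  obtain ⟨hr0, hr2⟩ := hr
  have hspos : 0 < Real.sin r :=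
    Real.sin_pos_of_pos_of_lt_pi hr0 (lt_of_le_of_lt hr2 (by linarith [Real.pi_pos]))
  have hd1 : deriv (fl l) = fun x => Real.cos x * (l ^ 2 * Real.sin x ^ 2 / 2 + 1) *
      (l ^ 2 * Real.sin x ^ 2 + 1) ^ (-(5:ℝ)/4) := funext fun x => (first_deriv l x).deriv
  have hC : HasDerivAt (fun y => l ^ 2 * Real.sin y ^ 2 / 2 + 1)
      (l ^ 2 * Real.sin r * Real.cos r) r := by
    have h := ((((Real.hasDerivAt_sin r).pow 2).const_mul (l ^ 2)).div_const 2).add_const 1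
    refine h.congr_deriv ?_; ring
  have hD : HasDerivAt (fun y => (l ^ 2 * Real.sin y ^ 2 + 1) ^ (-(5:ℝ)/4))
      ((-(5:ℝ)/4) * (l ^ 2 * Real.sin r ^ 2 + 1) ^ (-(5:ℝ)/4 - 1) *
        (2 * l ^ 2 * Real.sin r * Real.cos r)) r := by
    have h := (hBd l r).rpow_const (p := -(5:ℝ)/4) (Or.inl (ne_of_gt (hBpos l r)))
    convert h using 1; ring
  have hF2 := (((Real.hasDerivAt_cos r).mul hC).mul hD)
  have hd2 : deriv (deriv (fl l)) r =
      (-Real.sin r * (l ^ 2 * Real.sin r ^ 2 / 2 + 1) +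
        Real.cos r * (l ^ 2 * Real.sin r * Real.cos r)) *
        (l ^ 2 * Real.sin r ^ 2 + 1) ^ (-(5:ℝ)/4) +
      Real.cos r * (l ^ 2 * Real.sin r ^ 2 / 2 + 1) *
        ((-(5:ℝ)/4) * (l ^ 2 * Real.sin r ^ 2 + 1) ^ (-(5:ℝ)/4 - 1) *
          (2 * l ^ 2 * Real.sin r * Real.cos r)) := by
    rw [hd1]; exact hF2.deriv
  rw [hd2]
  set s := Real.sin r with hs
  set c := Real.cos r with hc
  have hBp : 0 < l ^ 2 * s ^ 2 + 1 := hBpos l r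
  have hc2 : c ^ 2 = 1 - s ^ 2 := by
    have := Real.sin_sq_add_cos_sq r; linarith
  set u := (l ^ 2 * s ^ 2 + 1) ^ ((1:ℝ)/4) with hu
  have hup : 0 < u := Real.rpow_pos_of_pos hBp _
  have hune : u ≠ 0 := ne_of_gt hup
  have hsne : s ≠ 0 := ne_of_gt hspos
  have hu4 : u ^ 4 = l ^ 2 * s ^ 2 + 1 := by
    rw [hu, ← Real.rpow_natCast ((l ^ 2 * s ^ 2 + 1) ^ ((1:ℝ)/4)) 4, ← Real.rpow_mul hBp.le]
    norm_num
  have h94 : (l ^ 2 * s ^ 2 + 1) ^ (-(5:ℝ)/4 - 1) = (u ^ 9)⁻¹ := by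
    rw [show (-(5:ℝ)/4 - 1) = -((9:ℝ)/4) by norm_num, Real.rpow_neg hBp.le, hu,
      ← Real.rpow_natCast ((l ^ 2 * s ^ 2 + 1) ^ ((1:ℝ)/4)) 9, ← Real.rpow_mul hBp.le]
    norm_num
  have h54 : (l ^ 2 * s ^ 2 + 1) ^ (-(5:ℝ)/4) = u ^ 4 * (u ^ 9)⁻¹ := by
    have h5 : u ^ 5 = (l ^ 2 * s ^ 2 + 1) ^ ((5:ℝ)/4) := by
      rw [hu, ← Real.rpow_natCast ((l ^ 2 * s ^ 2 + 1) ^ ((1:ℝ)/4)) 5, ← Real.rpow_mul hBp.le]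
      norm_num
    have he : u ^ 4 * (u ^ 9)⁻¹ = (u ^ 5)⁻¹ := by
      rw [show (9:ℕ) = 4 + 5 by norm_num, pow_add]
      field_simp
    rw [he, h5, show (-(5:ℝ)/4) = -((5:ℝ)/4) by norm_num, Real.rpow_neg hBp.le]
  have hfl : fl l r = s / u := rfl
  rw [hfl, h54, h94]
  have hE : (-s * (l ^ 2 * s ^ 2 / 2 + 1) + c * (l ^ 2 * s * c)) * (u ^ 4 * (u ^ 9)⁻¹) +
      c * (l ^ 2 * s ^ 2 / 2 + 1) * (-(5:ℝ)/4 * (u ^ 9)⁻¹ * (2 * l ^ 2 * s * c)) =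
      -(s * (l ^ 4 * s ^ 4 + l ^ 4 * s ^ 2 + 6 * l ^ 2 + 4)) / 4 * (u ^ 9)⁻¹ := by
    linear_combination (u ^ 9)⁻¹ * (-s * (l ^ 2 * s ^ 2 / 2 + 1) + l ^ 2 * s * c ^ 2) * hu4 +
      (u ^ 9)⁻¹ * l ^ 2 * s * (-(1/4) * l ^ 2 * s ^ 2 - 3/2) * hc2
  rw [hE]
  have hu8 : u ^ 9 = u * (l ^ 2 * s ^ 2 + 1) ^ 2 := by
    rw [show (9:ℕ) = 1 + 4*2 by norm_num, pow_add, pow_mul, hu4]; ring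
  rw [hu8]
  field_simp
end

section
/- For every real λ ≥ 1 and every r ∈ [0, π/2), the quantity −h_λ''(r)/h_λ(r) equals (λ²/A²)·((−2λ² + 2)·sin²r + 1), where A = λ²·sin²r + cos²r and h_λ'' denotes the second derivative of h_λ. -/
/-- The warping function `h_λ(r) = λ·cos r / √(λ²·sin²r + cos²r)`. -/
noncomputable def hwarp (l r : ℝ) : ℝ :=
  l * Real.cos r / Real.sqrt (l ^ 2 * Real.sin r ^ 2 + Real.cos r ^ 2)

lemma warpA_pos (l : ℝ) (hl : 1 ≤ l) (r : ℝ) :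
    0 < l ^ 2 * Real.sin r ^ 2 + Real.cos r ^ 2 := by
  have hl2 : 1 ≤ l ^ 2 := by nlinarith
  nlinarith [Real.sin_sq_add_cos_sq r, sq_nonneg (Real.sin r)]

lemma warpA_hasDeriv (l r : ℝ) :
    HasDerivAt (fun r => l ^ 2 * Real.sin r ^ 2 + Real.cos r ^ 2)
      (l ^ 2 * (2 * Real.sin r ^ 1 * Real.cos r) + 2 * Real.cos r ^ 1 * (-Real.sin r)) r := by
  exact (((Real.hasDerivAt_sin r).pow 2).const_mul (l ^ 2)).add ((Real.hasDerivAt_cos r).pow 2)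

lemma hwarp_hasDeriv (l : ℝ) (hl : 1 ≤ l) (r : ℝ) :
    HasDerivAt (hwarp l)
      (-l ^ 3 * Real.sin r / Real.sqrt (l ^ 2 * Real.sin r ^ 2 + Real.cos r ^ 2) ^ 3) r := by
  set A := fun r => l ^ 2 * Real.sin r ^ 2 + Real.cos r ^ 2 with hAdef
  have hA : 0 < A r := warpA_pos l hl r
  have hsA : Real.sqrt (A r) ≠ 0 := (Real.sqrt_pos.mpr hA).ne'
  have hsq : Real.sqrt (A r) ^ 2 = A r := Real.sq_sqrt hA.le
  have hd : HasDerivAt (fun r => Real.sqrt (A r))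
      ((l ^ 2 * (2 * Real.sin r ^ 1 * Real.cos r) + 2 * Real.cos r ^ 1 * (-Real.sin r)) /
        (2 * Real.sqrt (A r))) r := (warpA_hasDeriv l r).sqrt hA.ne'
  have hnum : HasDerivAt (fun r => l * Real.cos r) (l * (-Real.sin r)) r :=
    (Real.hasDerivAt_cos r).const_mul l
  have := hnum.fun_div hd hsA
  refine this.congr_deriv ?_
  have hpy : Real.sin r ^ 2 + Real.cos r ^ 2 = 1 := Real.sin_sq_add_cos_sq r
  set S := Real.sqrt (A r) with hS
  set s := Real.sin r
  set c := Real.cos r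
  have hAr : A r = l^2*s^2+c^2 := rfl
  field_simp
  linear_combination (-s) * hsq + (-s) * hAr + (-l^2*s) * hpy

lemma hwarp_deriv2 (l : ℝ) (hl : 1 ≤ l) (r : ℝ) :
    deriv (deriv (hwarp l)) r =
      -l ^ 3 * Real.cos r * ((-2 * l ^ 2 + 2) * Real.sin r ^ 2 + 1) /
        Real.sqrt (l ^ 2 * Real.sin r ^ 2 + Real.cos r ^ 2) ^ 5 := by
  set A := fun r => l ^ 2 * Real.sin r ^ 2 + Real.cos r ^ 2 with hAdef
  have hderiv : deriv (hwarp l) = fun r =>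
      -l ^ 3 * Real.sin r / Real.sqrt (A r) ^ 3 := by
    funext x
    exact (hwarp_hasDeriv l hl x).deriv
  rw [hderiv]
  have hA : 0 < A r := warpA_pos l hl r
  have hsA : Real.sqrt (A r) ≠ 0 := (Real.sqrt_pos.mpr hA).ne'
  have hsq : Real.sqrt (A r) ^ 2 = A r := Real.sq_sqrt hA.le
  have hd : HasDerivAt (fun r => Real.sqrt (A r))
      ((l ^ 2 * (2 * Real.sin r ^ 1 * Real.cos r) + 2 * Real.cos r ^ 1 * (-Real.sin r)) /
        (2 * Real.sqrt (A r))) r := (warpA_hasDeriv l r).sqrt hA.ne'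
  have hd3 : HasDerivAt (fun r => Real.sqrt (A r) ^ 3)
      (3 * Real.sqrt (A r) ^ 2 *
        ((l ^ 2 * (2 * Real.sin r ^ 1 * Real.cos r) + 2 * Real.cos r ^ 1 * (-Real.sin r)) /
          (2 * Real.sqrt (A r)))) r := by
    simpa using hd.fun_pow 3
  have hnum : HasDerivAt (fun r => -l ^ 3 * Real.sin r) (-l ^ 3 * Real.cos r) r := by
    simpa using (Real.hasDerivAt_sin r).const_mul (-l ^ 3)
  have h3ne : Real.sqrt (A r) ^ 3 ≠ 0 := pow_ne_zero 3 hsA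
  have := (hnum.fun_div hd3 h3ne).deriv
  rw [this]
  have hpy : Real.sin r ^ 2 + Real.cos r ^ 2 = 1 := Real.sin_sq_add_cos_sq r
  set S := Real.sqrt (A r) with hS
  set s := Real.sin r
  set c := Real.cos r
  have hAr : A r = l^2*s^2+c^2 := rfl
  field_simp
  linear_combination (-c) * hsq + (-c) * hAr + (-c) * hpy

theorem stmt_7 (l : ℝ) (hl : 1 ≤ l) (r : ℝ) (hr : r ∈ Set.Ico 0 (Real.pi / 2)) :
    -(deriv (deriv (hwarp l)) r) / hwarp l r =
      l ^ 2 / (l ^ 2 * Real.sin r ^ 2 + Real.cos r ^ 2) ^ 2 *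
        ((-2 * l ^ 2 + 2) * Real.sin r ^ 2 + 1) := by
  obtain ⟨hr0, hr1⟩ := hr
  have hc : 0 < Real.cos r := Real.cos_pos_of_mem_Ioo ⟨by linarith [Real.pi_pos], hr1⟩
  have hA : 0 < l ^ 2 * Real.sin r ^ 2 + Real.cos r ^ 2 := warpA_pos l hl r
  have hsA : Real.sqrt (l ^ 2 * Real.sin r ^ 2 + Real.cos r ^ 2) ≠ 0 := (Real.sqrt_pos.mpr hA).ne'
  have hsq : Real.sqrt (l ^ 2 * Real.sin r ^ 2 + Real.cos r ^ 2) ^ 2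
      = l ^ 2 * Real.sin r ^ 2 + Real.cos r ^ 2 := Real.sq_sqrt hA.le
  have hl0 : (0:ℝ) < l := lt_of_lt_of_le one_pos hl
  rw [hwarp_deriv2 l hl r, hwarp]
  set S := Real.sqrt (l ^ 2 * Real.sin r ^ 2 + Real.cos r ^ 2) with hS
  set s := Real.sin r
  set c := Real.cos r
  set A := l ^ 2 * s ^ 2 + c ^ 2 with hAdef
  field_simp
  linear_combination (-(2*(-l^2+1)*s^2+1)*(S^2+A)) * hsq
end

section
/- For every real λ ≥ 1 and every r ∈ [0, π/2), one has (A³ − λ⁶·sin²r) / (λ²·A²·cos²r) ≥ −λ⁴·sin²r·(sin²r + 1) / A², where A = λ²·sin²r + cos²r. -/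
theorem stmt_10 (l : ℝ) (hl : 1 ≤ l) (r : ℝ) (hr : r ∈ Set.Ico 0 (Real.pi / 2)) :
    ((l ^ 2 * Real.sin r ^ 2 + Real.cos r ^ 2) ^ 3 - l ^ 6 * Real.sin r ^ 2) /
        (l ^ 2 * (l ^ 2 * Real.sin r ^ 2 + Real.cos r ^ 2) ^ 2 * Real.cos r ^ 2) ≥
      -(l ^ 4 * Real.sin r ^ 2 * (Real.sin r ^ 2 + 1)) /
        (l ^ 2 * Real.sin r ^ 2 + Real.cos r ^ 2) ^ 2 := by
  obtain ⟨hr0, hr1⟩ := hr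
  have hc : 0 < Real.cos r := Real.cos_pos_of_mem_Ioo
    ⟨by linarith [Real.pi_pos], hr1⟩
  have hl0 : (0:ℝ) < l := lt_of_lt_of_le one_pos hl
  have hs : 0 ≤ Real.sin r := Real.sin_nonneg_of_nonneg_of_le_pi hr0
    (by linarith [Real.pi_pos])
  have hsc : Real.sin r ^ 2 + Real.cos r ^ 2 = 1 := Real.sin_sq_add_cos_sq r
  have hA : l ^ 2 * Real.sin r ^ 2 ≤ l ^ 2 * Real.sin r ^ 2 + Real.cos r ^ 2 := by
    nlinarith [sq_nonneg (Real.cos r)]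
  have hA0 : (0:ℝ) < l ^ 2 * Real.sin r ^ 2 + Real.cos r ^ 2 := by positivity
  have hcube : (l ^ 2 * Real.sin r ^ 2) ^ 3 ≤
      (l ^ 2 * Real.sin r ^ 2 + Real.cos r ^ 2) ^ 3 :=
    pow_le_pow_left₀ (by positivity) hA 3
  have hc2 : Real.cos r ^ 2 = 1 - Real.sin r ^ 2 := by linarith
  have hid : Real.sin r ^ 2 * (Real.sin r ^ 2 + 1) * Real.cos r ^ 2
      = Real.sin r ^ 2 - Real.sin r ^ 6 := by rw [hc2]; ring
  have h2 : l ^ 6 * (Real.sin r ^ 2 * (Real.sin r ^ 2 + 1) * Real.cos r ^ 2) *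
        (l ^ 2 * Real.sin r ^ 2 + Real.cos r ^ 2) ^ 2
      = l ^ 6 * (Real.sin r ^ 2 - Real.sin r ^ 6) *
        (l ^ 2 * Real.sin r ^ 2 + Real.cos r ^ 2) ^ 2 := by rw [hid]
  rw [ge_iff_le, div_le_div_iff₀ (by positivity) (by positivity)]
  nlinarith [h2, mul_nonneg (sub_nonneg.2 hcube)
    (sq_nonneg (l ^ 2 * Real.sin r ^ 2 + Real.cos r ^ 2))]
end

section
/- Let n ≥ 2 be an integer and m an integer with m ≥ 8(n−1). For every real λ ≥ 1 and every r ∈ [0, π/4], one has m·A²·(λ⁴·sin⁴r + λ⁴·sin²r + 6λ² + 4) − 8(n−1)·B²·λ⁴·sin²r ≥ 0, where A = λ²·sin²r + cos²r and B = λ²·sin²r + 1. -/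
theorem stmt_12 (n m : ℤ) (hn : 2 ≤ n) (hm : 8 * (n - 1) ≤ m)
    (l : ℝ) (hl : 1 ≤ l) (r : ℝ) (hr : r ∈ Set.Icc 0 (Real.pi / 4)) :
    (m : ℝ) * (l ^ 2 * Real.sin r ^ 2 + Real.cos r ^ 2) ^ 2 *
          (l ^ 4 * Real.sin r ^ 4 + l ^ 4 * Real.sin r ^ 2 + 6 * l ^ 2 + 4) -
        8 * ((n : ℝ) - 1) * (l ^ 2 * Real.sin r ^ 2 + 1) ^ 2 * l ^ 4 * Real.sin r ^ 2 ≥ 0 := by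
  obtain ⟨hr0, hr1⟩ := hr
  have hs : Real.sin r ≤ Real.cos r := by
    have := Real.cos_pi_div_four
    have h1 : r ≤ Real.pi / 2 := by
      have := Real.pi_pos; linarith
    calc Real.sin r ≤ Real.sin (Real.pi / 4) := by
          exact Real.sin_le_sin_of_le_of_le_pi_div_two (by linarith [Real.pi_pos]) (by linarith [Real.pi_pos]) hr1
      _ = Real.cos (Real.pi / 4) := by
          rw [Real.sin_pi_div_four, Real.cos_pi_div_four]
      _ ≤ Real.cos r := by
          apply Real.cos_le_cos_of_nonneg_of_le_pi hr0 (by linarith [Real.pi_pos]) hr1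
  have hsn : 0 ≤ Real.sin r := Real.sin_nonneg_of_nonneg_of_le_pi hr0 (by linarith [Real.pi_pos])
  set s := Real.sin r
  set c := Real.cos r
  have hsc : s ^ 2 + c ^ 2 = 1 := Real.sin_sq_add_cos_sq r
  have ht : s ^ 2 ≤ 1 / 2 := by nlinarith
  have htn : 0 ≤ s ^ 2 := sq_nonneg s
  have hu : 1 ≤ l ^ 2 := by nlinarith
  -- key inequality
  have key : (l ^ 2 * s ^ 2 + c ^ 2) ^ 2 *
        (l ^ 4 * s ^ 4 + l ^ 4 * s ^ 2 + 6 * l ^ 2 + 4) -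
      (l ^ 2 * s ^ 2 + 1) ^ 2 * l ^ 4 * s ^ 2 ≥ 0 := by
    have hc2 : c ^ 2 = 1 - s ^ 2 := by linarith
    rw [hc2]
    nlinarith [sq_nonneg (l^2 - 1), sq_nonneg (l^2*s^2), mul_nonneg (sq_nonneg (l^2-1)) htn,
      mul_nonneg (mul_nonneg (sq_nonneg (l^2-1)) htn) htn,
      mul_nonneg (mul_nonneg (mul_nonneg (sq_nonneg (l^2-1)) htn) htn) htn,
      mul_nonneg (mul_nonneg htn htn) (sub_nonneg.2 ht),
      mul_nonneg (mul_nonneg (mul_nonneg htn htn) (sub_nonneg.2 ht)) (sq_nonneg (l^2)),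
      mul_nonneg (mul_nonneg (mul_nonneg (mul_nonneg htn htn) (sub_nonneg.2 ht)) (sq_nonneg l)) (sq_nonneg l),
      sq_nonneg l, mul_nonneg htn (sub_nonneg.2 ht)]
  have hm' : (8 : ℝ) * ((n : ℝ) - 1) ≤ (m : ℝ) := by exact_mod_cast hm
  have hn' : (0 : ℝ) ≤ 8 * ((n : ℝ) - 1) := by
    have : (2 : ℝ) ≤ (n : ℝ) := by exact_mod_cast hn
    linarith
  have hX : 0 ≤ l ^ 4 * s ^ 4 + l ^ 4 * s ^ 2 + 6 * l ^ 2 + 4 := by positivity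
  have hA2 : (0:ℝ) ≤ (l ^ 2 * s ^ 2 + c ^ 2) ^ 2 := sq_nonneg _
  nlinarith [mul_nonneg (mul_nonneg (sub_nonneg.2 hm') hA2) hX, mul_nonneg hn' key]
end

section
/- Let n ≥ 2 be an integer and m an integer with m ≥ 8(n−1). For every real λ ≥ 1 and every real r, one has m·(λ⁴·sin⁴r + λ⁴·sin²r + 6λ² + 4)/(4·B²) + (n−1)·(λ²/A²)·((−2λ² + 2)·sin²r + 1) ≥ 1, where A = λ²·sin²r + cos²r and B = λ²·sin²r + 1. -/
theorem stmt_13 (n m : ℤ) (hn : 2 ≤ n) (hm : 8 * (n - 1) ≤ m)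
    (l : ℝ) (hl : 1 ≤ l) (r : ℝ) :
    (m : ℝ) * (l ^ 4 * Real.sin r ^ 4 + l ^ 4 * Real.sin r ^ 2 + 6 * l ^ 2 + 4) /
          (4 * (l ^ 2 * Real.sin r ^ 2 + 1) ^ 2) +
        ((n : ℝ) - 1) * (l ^ 2 / (l ^ 2 * Real.sin r ^ 2 + Real.cos r ^ 2) ^ 2 *
          ((-2 * l ^ 2 + 2) * Real.sin r ^ 2 + 1)) ≥ 1 := by
  set s := Real.sin r ^ 2 with hs
  have hs0 : 0 ≤ s := sq_nonneg _
  have hs1 : s ≤ 1 := Real.sin_sq_le_one r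
  have hc : Real.cos r ^ 2 = 1 - s := by rw [hs, Real.cos_sq']
  have hl0 : (0:ℝ) ≤ l := by linarith
  have hL : (1:ℝ) ≤ l ^ 2 := by nlinarith
  have h4 : Real.sin r ^ 4 = s ^ 2 := by rw [hs]; ring
  rw [hc, h4]
  set L := l ^ 2 with hLdef
  have hB : (0:ℝ) < L * s + 1 := by nlinarith
  have hA : (0:ℝ) < L * s + (1 - s) := by nlinarith
  have hE : l ^ 4 = L ^ 2 := by rw [hLdef]; ring
  have hN1 : 0 ≤ L ^ 2 * s ^ 2 + L ^ 2 * s + 6 * L + 4 := by nlinarith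
  have key : 2 * (L ^ 2 * s ^ 2 + L ^ 2 * s + 6 * L + 4) / (L * s + 1) ^ 2 +
      L / (L * s + (1 - s)) ^ 2 * ((-2 * L + 2) * s + 1) ≥ 1 := by
    rw [mul_comm (L / (L * s + (1 - s)) ^ 2), ← mul_div_assoc, ge_iff_le,
      div_add_div _ _ (by positivity) (by positivity), le_div_iff₀ (by positivity)]
    have h1 : 0 ≤ s * (1 - s) := mul_nonneg hs0 (by linarith)
    have h2 : 0 ≤ L - 1 := by linarith
    nlinarith [mul_nonneg (mul_nonneg h2 h2) h1, mul_nonneg h2 h1,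
      mul_nonneg (mul_nonneg h2 hs0) hs0, mul_nonneg (mul_nonneg (mul_nonneg h2 h2) hs0) hs0,
      mul_nonneg (mul_nonneg (mul_nonneg (mul_nonneg h2 h2) h2) hs0) hs0,
      mul_nonneg (mul_nonneg (mul_nonneg h2 h2) h2) h1,
      mul_nonneg (mul_nonneg (mul_nonneg (mul_nonneg h2 h2) h2) h2) (mul_nonneg hs0 hs0),
      sq_nonneg (L*s - 1), mul_nonneg h2 hs0, hs0, h2,
      mul_nonneg (mul_nonneg h2 h2) (mul_nonneg hs0 hs0)]
  have hk : (1:ℝ) ≤ (n:ℝ) - 1 := by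
    have : (2:ℝ) ≤ (n:ℝ) := by exact_mod_cast hn
    linarith
  have hm' : (8:ℝ) * ((n:ℝ) - 1) ≤ (m:ℝ) := by exact_mod_cast hm
  have e1 : ((n:ℝ) - 1) * (2 * (L ^ 2 * s ^ 2 + L ^ 2 * s + 6 * L + 4) / (L * s + 1) ^ 2)
      ≤ (m:ℝ) * (L ^ 2 * s ^ 2 + L ^ 2 * s + 6 * L + 4) / (4 * (L * s + 1) ^ 2) := by
    have : ((n:ℝ) - 1) * (2 * (L ^ 2 * s ^ 2 + L ^ 2 * s + 6 * L + 4) / (L * s + 1) ^ 2)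
        = (8 * ((n:ℝ) - 1)) * (L ^ 2 * s ^ 2 + L ^ 2 * s + 6 * L + 4) /
          (4 * (L * s + 1) ^ 2) := by
      field_simp; ring
    rw [this]
    gcongr
  calc (1:ℝ) ≤ ((n:ℝ) - 1) * 1 := by linarith
    _ ≤ ((n:ℝ) - 1) * (2 * (L ^ 2 * s ^ 2 + L ^ 2 * s + 6 * L + 4) / (L * s + 1) ^ 2 +
        L / (L * s + (1 - s)) ^ 2 * ((-2 * L + 2) * s + 1)) := by
      apply mul_le_mul_of_nonneg_left key (by linarith)
    _ = ((n:ℝ) - 1) * (2 * (L ^ 2 * s ^ 2 + L ^ 2 * s + 6 * L + 4) / (L * s + 1) ^ 2) +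
        ((n:ℝ) - 1) * (L / (L * s + (1 - s)) ^ 2 * ((-2 * L + 2) * s + 1)) := by ring
    _ ≤ (m:ℝ) * (L ^ 2 * s ^ 2 + L ^ 2 * s + 6 * L + 4) / (4 * (L * s + 1) ^ 2) +
        ((n:ℝ) - 1) * (L / (L * s + (1 - s)) ^ 2 * ((-2 * L + 2) * s + 1)) := by
      linarith
    _ = (m:ℝ) * (l ^ 4 * s ^ 2 + l ^ 4 * s + 6 * L + 4) / (4 * (L * s + 1) ^ 2) +
        ((n:ℝ) - 1) * (L / (L * s + (1 - s)) ^ 2 * ((-2 * L + 2) * s + 1)) := by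
      rw [hE]
end

section
/- Let n ≥ 2 and m ≥ 1 be integers. For every real λ ≥ 1 and every r ∈ (0, π/2), one has (λ⁴·sin⁴r + λ⁴·sin²r + 6λ² + 4)/(4·B²) + (m−1)·(1 − f_λ'(r)²)/f_λ(r)² + (n−1)·λ²·(B + 1)/(2·A·B) ≥ 1, where A = λ²·sin²r + cos²r, B = λ²·sin²r + 1, f_λ(r) = sin r / B^{1/4}, and f_λ' is the derivative of f_λ. -/
open Real

/-
The term `(λ⁴sin⁴r + λ⁴sin²r + 6λ² + 4)/(4B²)` is at least `1/2` because `sin²r ≤ 1`, the term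
with `n - 1` is at least `1/2` because `A ≤ λ²` once `λ ≥ 1`, and the term with `m - 1` is
nonnegative because `|f_λ'| ≤ 1`: indeed `f_λ' = cos r · (λ²sin²r/2 + 1) / B^{5/4}` and
`λ²sin²r/2 + 1 ≤ B ≤ B^{5/4}`.
-/

lemma hasDerivAt_fl (l r : ℝ) :
    HasDerivAt (fl l)
      (cos r * (l ^ 2 * sin r ^ 2 / 2 + 1) / (l ^ 2 * sin r ^ 2 + 1) ^ ((5 : ℝ) / 4)) r := by
  have hB : 0 < l ^ 2 * sin r ^ 2 + 1 := by positivity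
  have hB' : 0 < (l ^ 2 * sin r ^ 2 + 1) ^ ((1 : ℝ) / 4) := rpow_pos_of_pos hB _
  have hden : HasDerivAt (fun x => (l ^ 2 * sin x ^ 2 + 1) ^ ((1 : ℝ) / 4))
      (l ^ 2 * (2 * sin r ^ 1 * cos r) * (1 / 4) * (l ^ 2 * sin r ^ 2 + 1) ^ ((1 : ℝ) / 4 - 1))
      r :=
    ((((hasDerivAt_sin r).pow 2).const_mul (l ^ 2)).add_const 1).rpow_const (Or.inl hB.ne')
  refine ((hasDerivAt_sin r).div hden hB'.ne').congr_deriv ?_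
  rw [rpow_sub hB, rpow_one, show (5 : ℝ) / 4 = 1 + 1 / 4 by norm_num, rpow_add hB, rpow_one]
  field_simp
  ring

lemma sq_deriv_fl_le_one (l r : ℝ) : deriv (fl l) r ^ 2 ≤ 1 := by
  set B := l ^ 2 * sin r ^ 2 + 1
  have hB : 1 ≤ B := by nlinarith [sq_nonneg (l * sin r)]
  have hBP : B ≤ B ^ ((5 : ℝ) / 4) := by
    simpa using rpow_le_rpow_of_exponent_le hB (show (1 : ℝ) ≤ 5 / 4 by norm_num)
  have hnum : 0 < l ^ 2 * sin r ^ 2 / 2 + 1 := by positivity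
  have hP : 0 < B ^ ((5 : ℝ) / 4) := rpow_pos_of_pos (by linarith) _
  rw [(hasDerivAt_fl l r).deriv, sq_le_one_iff_abs_le_one, abs_div, abs_mul, abs_of_pos hnum,
    abs_of_pos hP, div_le_one hP]
  calc |cos r| * (l ^ 2 * sin r ^ 2 / 2 + 1) ≤ 1 * B := by
        gcongr
        · exact abs_cos_le_one r
        · nlinarith [sq_nonneg (l * sin r)]
    _ ≤ B ^ ((5 : ℝ) / 4) := by rwa [one_mul]

lemma one_half_le_quartic_ratio (l : ℝ) {s : ℝ} (hs : s ^ 2 ≤ 1) :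
    1 / 2 ≤ (l ^ 4 * s ^ 4 + l ^ 4 * s ^ 2 + 6 * l ^ 2 + 4) / (4 * (l ^ 2 * s ^ 2 + 1) ^ 2) := by
  rw [div_le_div_iff₀ (by norm_num) (by positivity)]
  nlinarith [mul_nonneg (mul_nonneg (sq_nonneg (l ^ 2)) (sq_nonneg s)) (sub_nonneg.2 hs),
    mul_nonneg (sq_nonneg l) (sub_nonneg.2 hs), sq_nonneg l]

lemma one_half_le_ratio_of_one_le_sq {l s c : ℝ} (hl : 1 ≤ l ^ 2) (hsc : s ^ 2 + c ^ 2 = 1) :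
    1 / 2 ≤ l ^ 2 * ((l ^ 2 * s ^ 2 + 1) + 1) /
      (2 * (l ^ 2 * s ^ 2 + c ^ 2) * (l ^ 2 * s ^ 2 + 1)) := by
  have hA : l ^ 2 * s ^ 2 + c ^ 2 ≤ l ^ 2 := by nlinarith [sq_nonneg c]
  have hA' : 0 < l ^ 2 * s ^ 2 + c ^ 2 := by nlinarith [sq_nonneg s, sq_nonneg (l * s)]
  rw [div_le_div_iff₀ (by norm_num) (by positivity)]
  nlinarith [mul_le_mul_of_nonneg_right hA (by positivity : (0 : ℝ) ≤ l ^ 2 * s ^ 2 + 1)]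

theorem stmt_14_general (n m : ℤ) (hn : 2 ≤ n) (hm : 1 ≤ m)
    (l : ℝ) (hl : 1 ≤ l) (r : ℝ) :
    (l ^ 4 * Real.sin r ^ 4 + l ^ 4 * Real.sin r ^ 2 + 6 * l ^ 2 + 4) /
          (4 * (l ^ 2 * Real.sin r ^ 2 + 1) ^ 2) +
        ((m : ℝ) - 1) * ((1 - (deriv (fl l) r) ^ 2) / (fl l r) ^ 2) +
        ((n : ℝ) - 1) * (l ^ 2 * ((l ^ 2 * Real.sin r ^ 2 + 1) + 1) /
          (2 * (l ^ 2 * Real.sin r ^ 2 + Real.cos r ^ 2) * (l ^ 2 * Real.sin r ^ 2 + 1))) ≥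
      1 := by
  have hm' : (0 : ℝ) ≤ m - 1 := sub_nonneg.2 (by exact_mod_cast hm)
  have hn' : (1 : ℝ) ≤ n - 1 := le_sub_iff_add_le.2 (by exact_mod_cast hn)
  have h₁ := one_half_le_quartic_ratio l (sin_sq_le_one r)
  have h₂ : 0 ≤ ((m : ℝ) - 1) * ((1 - deriv (fl l) r ^ 2) / fl l r ^ 2) :=
    mul_nonneg hm' (div_nonneg (sub_nonneg.2 (sq_deriv_fl_le_one l r)) (sq_nonneg _))
  have h₃ := one_half_le_ratio_of_one_le_sq (one_le_pow₀ hl : 1 ≤ l ^ 2) (sin_sq_add_cos_sq r)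
  have h₃' := le_mul_of_one_le_left (by linarith) hn'
  linarith

theorem stmt_14 (n m : ℤ) (hn : 2 ≤ n) (hm : 1 ≤ m)
    (l : ℝ) (hl : 1 ≤ l) (r : ℝ) (hr : r ∈ Set.Ioo 0 (Real.pi / 2)) :
    (l ^ 4 * Real.sin r ^ 4 + l ^ 4 * Real.sin r ^ 2 + 6 * l ^ 2 + 4) /
          (4 * (l ^ 2 * Real.sin r ^ 2 + 1) ^ 2) +
        ((m : ℝ) - 1) * ((1 - (deriv (fl l) r) ^ 2) / (fl l r) ^ 2) +
        ((n : ℝ) - 1) * (l ^ 2 * ((l ^ 2 * Real.sin r ^ 2 + 1) + 1) /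
          (2 * (l ^ 2 * Real.sin r ^ 2 + Real.cos r ^ 2) * (l ^ 2 * Real.sin r ^ 2 + 1))) ≥
      1 :=
  stmt_14_general n m hn hm l hl r
end

section
/- Let n ≥ 2 be an integer and m an integer with m ≥ 4n. For every real λ ≥ 1 and every r ∈ [0, π/2), one has (λ²/A²)·((−2λ² + 2)·sin²r + 1) + (n−2)·(A³ − λ⁶·sin²r)/(λ²·A²·cos²r) + m·λ²·(B + 1)/(2·A·B) ≥ 1, where A = λ²·sin²r + cos²r and B = λ²·sin²r + 1. -/
lemma aux15 (nn mm l s c : ℝ) (hn : 2 ≤ nn) (hm : 4 * nn ≤ mm)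
    (hl : 1 ≤ l ^ 2) (hs : 0 ≤ s) (hc : 0 < c) (hsc : s + c = 1) :
    l ^ 2 / (l ^ 2 * s + c) ^ 2 * ((-2 * l ^ 2 + 2) * s + 1) +
        (nn - 2) * (((l ^ 2 * s + c) ^ 3 - l ^ 6 * s) /
          (l ^ 2 * (l ^ 2 * s + c) ^ 2 * c)) +
        mm * (l ^ 2 * ((l ^ 2 * s + 1) + 1) /
          (2 * (l ^ 2 * s + c) * (l ^ 2 * s + 1))) ≥ 1 := by
  have hc1 : c = 1 - s := by linarith
  subst hc1
  have hl0 : (0:ℝ) < l ^ 2 := by linarith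
  have hA0 : 0 < l ^ 2 * s + (1 - s) := by nlinarith
  have hA1 : 1 ≤ l ^ 2 * s + (1 - s) := by nlinarith
  have hAle : l ^ 2 * s + (1 - s) ≤ l ^ 2 := by nlinarith
  have hAs : l ^ 2 * s ≤ l ^ 2 * s + (1 - s) := by linarith
  have hs1 : s ≤ 1 := by linarith
  have hB0 : (0:ℝ) < l ^ 2 * s + 1 := by nlinarith
  have hmm : (0:ℝ) ≤ mm := by linarith
  -- first term bound
  have e1 : -(2 * l ^ 2) / (l ^ 2 * s + (1 - s)) ≤
      l ^ 2 / (l ^ 2 * s + (1 - s)) ^ 2 * ((-2 * l ^ 2 + 2) * s + 1) := by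
    rw [div_mul_eq_mul_div, div_le_div_iff₀ hA0 (by positivity)]
    nlinarith [mul_pos hl0 hA0]
  -- key identity removing the (1-s) from the denominator
  have key : ((l ^ 2 * s + (1 - s)) ^ 3 - l ^ 6 * s) /
      (l ^ 2 * (l ^ 2 * s + (1 - s)) ^ 2 * (1 - s)) =
      ((l ^ 2 * s + (1 - s)) ^ 2 + (l ^ 2 * s + (1 - s)) * (l ^ 2 * s) + l ^ 4 * s ^ 2
        - l ^ 6 * s * (1 + s)) / (l ^ 2 * (l ^ 2 * s + (1 - s)) ^ 2) := by
    rw [div_eq_div_iff (by positivity) (by positivity)]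
    ring
  have e2core : -(2 * l ^ 2) / (l ^ 2 * s + (1 - s)) ≤
      ((l ^ 2 * s + (1 - s)) ^ 2 + (l ^ 2 * s + (1 - s)) * (l ^ 2 * s) + l ^ 4 * s ^ 2
        - l ^ 6 * s * (1 + s)) / (l ^ 2 * (l ^ 2 * s + (1 - s)) ^ 2) := by
    rw [div_le_div_iff₀ hA0 (by positivity)]
    nlinarith [mul_le_mul_of_nonneg_left hAs
        (show (0:ℝ) ≤ l ^ 4 * (l ^ 2 * s + (1 - s)) by positivity),
      mul_le_mul_of_nonneg_left hAs
        (show (0:ℝ) ≤ l ^ 4 * s * (l ^ 2 * s + (1 - s)) by positivity),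
      mul_le_mul_of_nonneg_left hs1
        (show (0:ℝ) ≤ l ^ 4 * (l ^ 2 * s + (1 - s)) ^ 2 by positivity),
      mul_pos (mul_pos hA0 hA0) hA0,
      mul_nonneg (mul_nonneg (mul_pos hA0 hA0).le hl0.le) hs,
      mul_nonneg (mul_nonneg (mul_nonneg hA0.le (by positivity : (0:ℝ) ≤ l ^ 4)) hs) hs]
  have e2 : (nn - 2) * (-(2 * l ^ 2) / (l ^ 2 * s + (1 - s))) ≤
      (nn - 2) * (((l ^ 2 * s + (1 - s)) ^ 3 - l ^ 6 * s) /
        (l ^ 2 * (l ^ 2 * s + (1 - s)) ^ 2 * (1 - s))) := by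
    rw [key]
    exact mul_le_mul_of_nonneg_left e2core (by linarith)
  have e3core : l ^ 2 / (2 * (l ^ 2 * s + (1 - s))) ≤
      l ^ 2 * ((l ^ 2 * s + 1) + 1) /
        (2 * (l ^ 2 * s + (1 - s)) * (l ^ 2 * s + 1)) := by
    rw [div_le_div_iff₀ (by positivity) (by positivity)]
    nlinarith [mul_pos hl0 hA0]
  have e3 : mm * (l ^ 2 / (2 * (l ^ 2 * s + (1 - s)))) ≤
      mm * (l ^ 2 * ((l ^ 2 * s + 1) + 1) /
        (2 * (l ^ 2 * s + (1 - s)) * (l ^ 2 * s + 1))) :=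
    mul_le_mul_of_nonneg_left e3core hmm
  have e4 : 1 ≤ -(2 * l ^ 2) / (l ^ 2 * s + (1 - s)) +
      (nn - 2) * (-(2 * l ^ 2) / (l ^ 2 * s + (1 - s))) +
      mm * (l ^ 2 / (2 * (l ^ 2 * s + (1 - s)))) := by
    have hsum : -(2 * l ^ 2) / (l ^ 2 * s + (1 - s)) +
        (nn - 2) * (-(2 * l ^ 2) / (l ^ 2 * s + (1 - s))) +
        mm * (l ^ 2 / (2 * (l ^ 2 * s + (1 - s)))) =
        ((mm / 2 - 2 * nn + 2) * l ^ 2) / (l ^ 2 * s + (1 - s)) := by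
      field_simp
      ring
    rw [hsum, le_div_iff₀ hA0]
    nlinarith [mul_nonneg (show (0:ℝ) ≤ mm / 2 - 2 * nn by linarith) hl0.le]
  linarith [e1, e2, e3, e4]

theorem stmt_15 (n m : ℤ) (hn : 2 ≤ n) (hm : 4 * n ≤ m)
    (l : ℝ) (hl : 1 ≤ l) (r : ℝ) (hr : r ∈ Set.Ico 0 (Real.pi / 2)) :
    l ^ 2 / (l ^ 2 * Real.sin r ^ 2 + Real.cos r ^ 2) ^ 2 *
          ((-2 * l ^ 2 + 2) * Real.sin r ^ 2 + 1) +
        ((n : ℝ) - 2) * (((l ^ 2 * Real.sin r ^ 2 + Real.cos r ^ 2) ^ 3 -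
            l ^ 6 * Real.sin r ^ 2) /
          (l ^ 2 * (l ^ 2 * Real.sin r ^ 2 + Real.cos r ^ 2) ^ 2 * Real.cos r ^ 2)) +
        (m : ℝ) * (l ^ 2 * ((l ^ 2 * Real.sin r ^ 2 + 1) + 1) /
          (2 * (l ^ 2 * Real.sin r ^ 2 + Real.cos r ^ 2) * (l ^ 2 * Real.sin r ^ 2 + 1))) ≥
      1 := by
  have hn' : (2:ℝ) ≤ (n:ℝ) := by exact_mod_cast hn
  have hm' : 4 * (n:ℝ) ≤ (m:ℝ) := by exact_mod_cast hm
  have hl2 : 1 ≤ l ^ 2 := by nlinarith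
  have hcos : 0 < Real.cos r := by
    apply Real.cos_pos_of_mem_Ioo
    constructor
    · linarith [hr.1, Real.pi_pos]
    · exact hr.2
  exact aux15 (n:ℝ) (m:ℝ) l (Real.sin r ^ 2) (Real.cos r ^ 2) hn' hm' hl2
    (sq_nonneg _) (pow_pos hcos 2) (Real.sin_sq_add_cos_sq r)
end
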